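/- arXiv:math/0411163 — 2 statements merged into one kernel-verified Lean document; each statement's English description precedes it below -/
import Mathlib

section
/- Define a sequence (a_k)_{k≥0} by a_0 = 1 and the recurrence a_k = Σ_{j=0}^{k-1} C(2k, 2j+1) · a_j · a_{k-j-1} for k ≥ 1 (where C(n,m) is the binomial coefficient). Then tan x = Σ_{k≥0} (a_k/(2k+1)!) x^{2k+1} as formal power series (equivalently, the a_k are the tangent/Zag numbers). -/
/-!
`tan` is holomorphic on the disc `‖z‖ < π / 2`, so it is the sum of its Taylor series at `0`
there. Since `tan` is odd its even derivatives at `0` vanish, and since `tan' = 1 + tan ^ 2`,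
Leibniz's rule expresses `tan⁽²ᵏ⁺¹⁾(0)` through the lower odd derivatives by exactly the
recurrence defining `a k`.
-/

open Finset Topology Nat Real

theorem Finset.sum_range_two_mul_add_one_of_even_eq_zero {M : Type*} [AddCommMonoid M]
    {f : ℕ → M} (hf : ∀ j, f (2 * j) = 0) (k : ℕ) :
    ∑ i ∈ range (2 * k + 1), f i = ∑ j ∈ range k, f (2 * j + 1) := by
  induction k with
  | zero => simpa using hf 0
  | succ k ih =>
    rw [show 2 * (k + 1) + 1 = 2 * k + 1 + 1 + 1 by ring, sum_range_succ, sum_range_succ, ih,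
      sum_range_succ, show 2 * k + 1 + 1 = 2 * (k + 1) by ring, hf, add_zero]

theorem hasSum_two_mul_add_one_iff_of_even_eq_zero {M : Type*} [AddCommMonoid M]
    [TopologicalSpace M] {f : ℕ → M} (hf : ∀ j, f (2 * j) = 0) {a : M} :
    HasSum (fun k ↦ f (2 * k + 1)) a ↔ HasSum f a := by
  refine Function.Injective.hasSum_iff (g := fun k ↦ 2 * k + 1)
    (fun i j h ↦ by simp only at h; omega) fun n hn ↦ ?_
  obtain ⟨j, rfl | rfl⟩ := n.even_or_odd'
  · exact hf j
  · exact absurd ⟨j, rfl⟩ hn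

theorem Function.Odd.iteratedDeriv_two_mul_zero {𝕜 F : Type*} [NontriviallyNormedField 𝕜]
    [CharZero 𝕜] [NormedAddCommGroup F] [NormedSpace 𝕜 F] {f : 𝕜 → F} (hf : f.Odd)
    (k : ℕ) :
    iteratedDeriv (2 * k) f 0 = 0 := by
  have h : iteratedDeriv (2 * k) f 0 = -iteratedDeriv (2 * k) f 0 := calc
    _ = iteratedDeriv (2 * k) (fun x ↦ -f (-x)) 0 := by simp only [hf _, neg_neg]
    _ = -iteratedDeriv (2 * k) f 0 := by
      rw [iteratedDeriv_fun_neg, iteratedDeriv_comp_neg, pow_mul, neg_one_sq, one_pow, one_smul,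
        neg_zero]
  have h2 : (2 : 𝕜) • iteratedDeriv (2 * k) f 0 = 0 := by
    rw [two_smul]
    nth_rewrite 1 [h]
    exact neg_add_cancel _
  exact (smul_eq_zero.1 h2).resolve_left two_ne_zero

theorem iteratedDeriv_succ_of_deriv_eq_one_add_mul_self {𝕜 : Type*}
    [NontriviallyNormedField 𝕜] {f : 𝕜 → 𝕜} {x : 𝕜}
    (hderiv : deriv f =ᶠ[𝓝 x] fun z ↦ 1 + f z * f z) {n : ℕ} (hn : 0 < n)
    (hf : ContDiffAt 𝕜 n f x) :
    iteratedDeriv (n + 1) f x =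
      ∑ i ∈ range (n + 1), n.choose i * iteratedDeriv i f x * iteratedDeriv (n - i) f x := by
  rw [iteratedDeriv_succ', hderiv.iteratedDeriv_eq, iteratedDeriv_const_add hn,
    iteratedDeriv_fun_mul hf hf]

namespace Complex

theorem tan_odd : Function.Odd tan := tan_neg

theorem deriv_tan_eventuallyEq {z : ℂ} (hz : cos z ≠ 0) :
    deriv tan =ᶠ[𝓝 z] fun w ↦ 1 + tan w * tan w := by
  filter_upwards [continuous_cos.continuousAt.eventually_ne hz] with w hw
  rw [deriv_tan, tan_eq_sin_div_cos]
  field_simp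
  exact (cos_sq_add_sin_sq w).symm

theorem cos_ne_zero_of_norm_lt_pi_div_two {z : ℂ} (hz : ‖z‖ < π / 2) : cos z ≠ 0 := by
  refine cos_ne_zero_iff.2 fun k hk ↦ ?_
  have hk' : (1 : ℝ) ≤ |2 * (k : ℝ) + 1| := by
    exact_mod_cast Int.one_le_abs (by omega : 2 * k + 1 ≠ 0)
  rw [hk, show (2 * k + 1 : ℂ) * π / 2 = ((2 * k + 1) * π / 2 : ℝ) by push_cast; rfl,
    norm_real, Real.norm_eq_abs, abs_div, abs_mul, abs_of_pos Real.pi_pos, abs_two] at hz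
  nlinarith [Real.pi_pos]

theorem hasSum_taylorSeries_tan {z : ℂ} (hz : ‖z‖ < π / 2) :
    HasSum (fun n ↦ (n ! : ℂ)⁻¹ • z ^ n • iteratedDeriv n tan 0) (tan z) := by
  have hdiff : DifferentiableOn ℂ tan (Metric.ball 0 (π / 2)) := fun w hw ↦
    (differentiableAt_tan.2 <| cos_ne_zero_of_norm_lt_pi_div_two <| mem_ball_zero_iff.1 hw)
      |>.differentiableWithinAt
  simpa using hasSum_taylorSeries_on_ball hdiff (mem_ball_zero_iff.2 hz)

theorem iteratedDeriv_one_tan_zero : iteratedDeriv 1 tan 0 = 1 := by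
  simp [deriv_tan]

theorem iteratedDeriv_two_mul_add_one_tan_zero {k : ℕ} (hk : 0 < k) :
    iteratedDeriv (2 * k + 1) tan 0 = ∑ j ∈ range k, (2 * k).choose (2 * j + 1) *
      iteratedDeriv (2 * j + 1) tan 0 * iteratedDeriv (2 * (k - j - 1) + 1) tan 0 := by
  have hcos : cos 0 ≠ 0 := by simp
  rw [iteratedDeriv_succ_of_deriv_eq_one_add_mul_self (deriv_tan_eventuallyEq hcos) (by omega)
      (contDiffAt_tan.2 hcos),
    sum_range_two_mul_add_one_of_even_eq_zero fun j ↦ by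
      rw [tan_odd.iteratedDeriv_two_mul_zero, mul_zero, zero_mul]]
  refine sum_congr rfl fun j hj ↦ ?_
  rw [show 2 * k - (2 * j + 1) = 2 * (k - j - 1) + 1 by have := mem_range.1 hj; omega]

theorem iteratedDeriv_two_mul_add_one_tan_zero_eq {a : ℕ → ℚ} (h0 : a 0 = 1)
    (hrec : ∀ k, 1 ≤ k →
      a k = ∑ j ∈ range k, ((2 * k).choose (2 * j + 1) : ℚ) * a j * a (k - j - 1))
    (k : ℕ) : iteratedDeriv (2 * k + 1) tan 0 = a k := by
  induction k using Nat.strong_induction_on with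
  | _ k ih =>
    rcases k.eq_zero_or_pos with rfl | hk
    · simp [h0, iteratedDeriv_one_tan_zero]
    · rw [iteratedDeriv_two_mul_add_one_tan_zero hk, hrec k hk]
      push_cast
      refine sum_congr rfl fun j hj ↦ ?_
      have hj := mem_range.1 hj
      rw [ih j hj, ih (k - j - 1) (by omega)]

end Complex

/-- Let `a_0 = 1` and `a_k = Σ_{j=0}^{k-1} C(2k, 2j+1) a_j a_{k-j-1}` for `k ≥ 1`.
Then `tan x = Σ_{k≥0} (a_k/(2k+1)!) x^{2k+1}` (valid for `|x| < π/2`); i.e. the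
`a_k` are the tangent (Zag) numbers. -/
theorem tan_series_zag (a : ℕ → ℚ) (h0 : a 0 = 1)
    (hrec : ∀ k, 1 ≤ k →
      a k = ∑ j ∈ Finset.range k,
        (Nat.choose (2 * k) (2 * j + 1) : ℚ) * a j * a (k - j - 1)) :
    ∀ x : ℝ, |x| < Real.pi / 2 →
      HasSum (fun k : ℕ => ((a k : ℝ) / (Nat.factorial (2 * k + 1) : ℝ)) * x ^ (2 * k + 1))
        (Real.tan x) := by
  intro x hx
  have hx' : ‖(x : ℂ)‖ < π / 2 := by rwa [Complex.norm_real, Real.norm_eq_abs]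
  have hseries := (hasSum_two_mul_add_one_iff_of_even_eq_zero fun j ↦ by
    simp [Complex.tan_odd.iteratedDeriv_two_mul_zero]).2 (Complex.hasSum_taylorSeries_tan hx')
  rw [← Complex.hasSum_ofReal, Complex.ofReal_tan]
  convert hseries using 2 with k
  rw [Complex.iteratedDeriv_two_mul_add_one_tan_zero_eq h0 hrec]
  push_cast
  ring
end

section
/- For the vertex-relabeling sign-count c_Γ = Σ_{σ∈S_V} (-1)^{#edges inverted by σ}: if Γ is the disjoint union of pairwise non-isomorphic graphs Γ_1,...,Γ_n with V_1,...,V_n vertices (V = ΣV_i), then c_Γ = (V!/(V_1!···V_n!)) · c_{Γ_1} ··· c_{Γ_n}. -/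
/-- The sign-count `c_Γ` of a labeled graph: the vertex set is a linearly ordered
finite type `α`, edges are recorded as ordered pairs (oriented from lower to
higher endpoint), and
`c_Γ = Σ_{σ ∈ S_V} (-1)^{#{edges {i,j}, i<j, with σ(i) > σ(j)}}`. -/
noncomputable def cGamma {α ι : Type*} [Fintype α] [LinearOrder α] [Fintype ι]
    (s : ι → α × α) : ℤ :=
  ∑ σ : Equiv.Perm α,
    (-1 : ℤ) ^ (Finset.univ.filter fun e => σ (s e).2 < σ (s e).1).card

/-- Isomorphism of (multi)graphs: a bijection of vertices and a bijection of edges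
matching each edge's unordered pair of endpoints. -/
def GraphIso {α β ι κ : Type*} [DecidableEq β] (s : ι → α × α) (t : κ → β × β) : Prop :=
  ∃ (σ : α ≃ β) (τ : ι ≃ κ), ∀ e,
    ({σ (s e).1, σ (s e).2} : Finset β) = {(t (τ e)).1, (t (τ e)).2}

/-- The disjoint union of labeled graphs `Γ_1, ..., Γ_n`, with vertex set the
lexicographically ordered sigma type (each `Γ_i` placed on its own block of
vertices, order-preservingly). -/
def disjUnion {n : ℕ} {V E : Fin n → ℕ} (s : ∀ i, Fin (E i) → Fin (V i) × Fin (V i)) :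
    (Σ i, Fin (E i)) → (Σₗ i, Fin (V i)) × (Σₗ i, Fin (V i)) := fun e =>
  (toLex ⟨e.1, (s e.1 e.2).1⟩, toLex ⟨e.1, (s e.1 e.2).2⟩)

/-!
Every permutation of the disjoint union factors uniquely as `m * blockPerm π`, where `π` permutes
each block and the shuffle `m` is increasing on each block. Every edge lies inside a block, and `m`
preserves the order inside each block, so the edges inverted by `m * blockPerm π` are exactly those
inverted by the `π i`. Hence `c_Γ = #shuffles · ∏ c_{Γ_i}`, and the same factorization, counted,
gives `#shuffles · ∏ V_i! = V!`.
-/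

open Equiv

lemma Equiv.Perm.eq_one_of_strictMono {α : Type*} [LinearOrder α] [WellFoundedLT α]
    {ρ : Perm α} (hρ : StrictMono ρ) : ρ = 1 := by
  ext x
  exact congrArg (fun e : α ≃o α => e x)
    (Subsingleton.elim (hρ.orderIsoOfSurjective ρ ρ.surjective) (OrderIso.refl α))

lemma Equiv.Perm.eq_of_strictMono_comp_eq {α β : Type*} [LinearOrder α] [WellFoundedLT α]
    [Preorder β] {f g : α → β} (hf : StrictMono f) (hg : StrictMono g) {ρ ρ' : Perm α}
    (h : ∀ x, f (ρ x) = g (ρ' x)) : ρ = ρ' := by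
  have hmono : StrictMono (ρ' * ρ⁻¹) := fun a b hab => by
    rw [← hg.lt_iff_lt]
    simpa [← h] using hf hab
  exact (mul_inv_eq_one.mp (Perm.eq_one_of_strictMono hmono)).symm

lemma Fin.exists_perm_strictMono_comp {β : Type*} [LinearOrder β] {k : ℕ} {f : Fin k → β}
    (hf : Function.Injective f) : ∃ τ : Perm (Fin k), StrictMono (f ∘ τ) :=
  ⟨Tuple.sort f,
    (Tuple.monotone_sort f).strictMono_of_injective (hf.comp (Tuple.sort f).injective)⟩

section Shuffles

open Finset

variable {ι : Type*} {V : ι → ℕ}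

def blockPerm (π : ∀ i, Perm (Fin (V i))) : Perm (Σₗ i, Fin (V i)) :=
  toLex.permCongr (Perm.sigmaCongrRight π)

lemma blockPerm_one : blockPerm (1 : ∀ i, Perm (Fin (V i))) = 1 := rfl

lemma blockPerm_mul (π π' : ∀ i, Perm (Fin (V i))) :
    blockPerm (π * π') = blockPerm π * blockPerm π' := rfl

variable [Fintype ι] [LinearOrder ι]

variable (V) in
open Classical in
noncomputable def shuffles : Finset (Perm (Σₗ i, Fin (V i))) :=
  univ.filter fun m => ∀ i, StrictMono fun x : Fin (V i) => m (toLex ⟨i, x⟩)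

lemma mem_shuffles {m : Perm (Σₗ i, Fin (V i))} :
    m ∈ shuffles V ↔ ∀ i, StrictMono fun x : Fin (V i) => m (toLex ⟨i, x⟩) := by
  simp [shuffles]

lemma bijective_shuffle_mul_blockPerm :
    Function.Bijective
      fun p : shuffles V × (∀ i, Perm (Fin (V i))) => (p.1 : Perm _) * blockPerm p.2 := by
  constructor
  · rintro ⟨⟨m, hm⟩, π⟩ ⟨⟨m', hm'⟩, π'⟩ h
    obtain rfl : π = π' := funext fun i =>
      Perm.eq_of_strictMono_comp_eq (mem_shuffles.mp hm i) (mem_shuffles.mp hm' i)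
        fun x => DFunLike.congr_fun h (toLex ⟨i, x⟩)
    simpa using mul_right_cancel h
  · intro σ
    have hinj (i : ι) : Function.Injective fun x : Fin (V i) => σ (toLex ⟨i, x⟩) :=
      fun a b hab => by simpa using σ.injective hab
    choose τ hτ using fun i => Fin.exists_perm_strictMono_comp (hinj i)
    refine ⟨⟨⟨σ * blockPerm τ, mem_shuffles.mpr hτ⟩, τ⁻¹⟩, ?_⟩
    simp [mul_assoc, ← blockPerm_mul, blockPerm_one]

lemma card_shuffles : #(shuffles V) = Nat.multinomial univ V := by
  have hcard := Fintype.card_of_bijective (bijective_shuffle_mul_blockPerm (V := V))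
  simp only [Fintype.card_prod, Fintype.card_coe, Fintype.card_pi, Fintype.card_perm,
    Fintype.card_lex, Fintype.card_sigma, Fintype.card_fin] at hcard
  rw [← Nat.multinomial_spec, mul_comm] at hcard
  exact Nat.eq_of_mul_eq_mul_left (prod_pos fun i _ => Nat.factorial_pos (V i)) hcard

lemma sum_perm_eq_multinomial_smul {M : Type*} [AddCommMonoid M]
    (f : Perm (Σₗ i, Fin (V i)) → M) (g : (∀ i, Perm (Fin (V i))) → M)
    (hfg : ∀ m ∈ shuffles V, ∀ π, f (m * blockPerm π) = g π) :
    ∑ σ, f σ = Nat.multinomial univ V • ∑ π, g π := by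
  rw [← bijective_shuffle_mul_blockPerm.sum_comp, Fintype.sum_prod_type]
  simp only [fun (m : shuffles V) π => hfg m m.2 π, sum_const, card_univ, Fintype.card_coe,
    card_shuffles]

end Shuffles

open scoped Finset

def invertedEdges {α ι : Type*} [LinearOrder α] [Fintype ι] (σ : Perm α) (s : ι → α × α) :
    Finset ι :=
  Finset.univ.filter fun e => σ (s e).2 < σ (s e).1

lemma cGamma_eq_sum_invertedEdges {α ι : Type*} [Fintype α] [LinearOrder α] [Fintype ι]
    (s : ι → α × α) : cGamma s = ∑ σ, (-1) ^ #(invertedEdges σ s) := rfl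

lemma invertedEdges_mul_blockPerm_disjUnion {n : ℕ} {V E : Fin n → ℕ}
    (s : ∀ i, Fin (E i) → Fin (V i) × Fin (V i)) {m : Perm (Σₗ i, Fin (V i))}
    (hm : m ∈ shuffles V) (π : ∀ i, Perm (Fin (V i))) :
    invertedEdges (m * blockPerm π) (disjUnion s) =
      Finset.univ.sigma fun i => invertedEdges (π i) (s i) := by
  ext ⟨i, e⟩
  simp only [invertedEdges, Finset.mem_filter, Finset.mem_sigma, Finset.mem_univ, true_and]
  exact (mem_shuffles.mp hm i).lt_iff_lt

theorem cGamma_disjUnion_general {n : ℕ} {V E : Fin n → ℕ}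
    (s : ∀ i, Fin (E i) → Fin (V i) × Fin (V i)) :
    cGamma (disjUnion s) =
      (Nat.multinomial Finset.univ V : ℤ) * ∏ i, cGamma (s i) := by
  have hfactor : ∀ m ∈ shuffles V, ∀ π : ∀ i, Perm (Fin (V i)),
      (-1 : ℤ) ^ #(invertedEdges (m * blockPerm π) (disjUnion s)) =
        ∏ i, (-1) ^ #(invertedEdges (π i) (s i)) := fun m hm π => by
    rw [invertedEdges_mul_blockPerm_disjUnion s hm, Finset.card_sigma,
      Finset.prod_pow_eq_pow_sum]
  simp only [cGamma_eq_sum_invertedEdges]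
  refine (sum_perm_eq_multinomial_smul _ _ hfactor).trans ?_
  rw [nsmul_eq_mul, Fintype.prod_sum]

/-- If `Γ` is the disjoint union of pairwise non-isomorphic graphs `Γ_1,...,Γ_n`
with `V_1,...,V_n` vertices, then
`c_Γ = (V!/(V_1!···V_n!)) · c_{Γ_1} ··· c_{Γ_n}` (with `V = Σ V_i`). -/
theorem cGamma_disjUnion {n : ℕ} {V E : Fin n → ℕ}
    (s : ∀ i, Fin (E i) → Fin (V i) × Fin (V i))
    (hor : ∀ i e, (s i e).1 < (s i e).2)
    (hiso : ∀ i j, i ≠ j → ¬ GraphIso (s i) (s j)) :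
    cGamma (disjUnion s) =
      (Nat.multinomial Finset.univ V : ℤ) * ∏ i, cGamma (s i) :=
  cGamma_disjUnion_general s
end
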